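/- Let S, A be finite nonempty sets, r : S × A → ℝ, P : S × A → (S → ℝ) with P(s,a)(s') ≥ 0 and ∑_{s'} P(s,a)(s') = 1, π : S → (A → ℝ) with π(s)(a) > 0 and ∑_a π(s)(a) = 1, and let 0 ≤ γ < 1 and α ≥ 0. For a family Z : S × A → (Borel probability measures on ℝ), define the soft distributional Bellman operator (T_H^π Z)(s,a) = ∑_{s' ∈ S} ∑_{a' ∈ A} P(s,a)(s') · π(s')(a') · (f_{s,a,s',a'})_*(Z(s',a')), where f_{s,a,s',a'}(x) = r(s,a) + γ·(x − α·log π(s')(a')) and (f)_* denotes pushforward. Then for any two families Z₁, Z₂ such that every Z₁(s,a) and Z₂(s,a) has a finite first moment, one has the contraction max_{(s,a) ∈ S×A} d_e((T_H^π Z₁)(s,a), (T_H^π Z₂)(s,a)) ≤ γ · max_{(s,a) ∈ S×A} d_e(Z₁(s,a), Z₂(s,a)). -/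

import Mathlib

open MeasureTheory ProbabilityTheory Filter
open scoped ENNReal Topology

/-- The energy distance (squared Cramér distance) between two measures on `ℝ`. -/
noncomputable def energyDist (μ ν : Measure ℝ) : ℝ≥0∞ :=
  ∫⁻ x, ENNReal.ofReal ((cdf μ x - cdf ν x) ^ 2)

/-- The soft distributional Bellman operator: `(T_H^π Z)(s,a)` is the mixture over
successor pairs `(s',a')` of the pushforward of `Z(s',a')` under
`x ↦ r(s,a) + γ(x − α log π(s')(a'))`. -/
noncomputable def softDistBellman {S A : Type*} [Fintype S] [Fintype A]
    (r : S × A → ℝ) (P : S × A → S → ℝ) (pol : S → A → ℝ) (γ α : ℝ)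
    (Z : S × A → Measure ℝ) : S × A → Measure ℝ := fun p =>
  ∑ s' : S, ∑ a' : A,
    ENNReal.ofReal (P p s' * pol s' a') •
      Measure.map (fun x => r p + γ * (x - α * Real.log (pol s' a'))) (Z (s', a'))

/-! The energy distance is an `L²` distance of CDFs. A common increasing affine map
`x ↦ c + γ x` turns CDFs into `F ((x - c) / γ)`, so by the change of variables it multiplies the
energy distance by `γ`. A mixture with weights `wᵢ` has CDF `∑ wᵢ Fᵢ`, and Jensen's inequality
`(∑ wᵢ dᵢ)² ≤ ∑ wᵢ dᵢ²` bounds the energy distance of two mixtures by the weighted average of the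
energy distances of their components, which is at most their supremum. -/

open Set

@[fun_prop]
lemma measurable_cdf (μ : Measure ℝ) : Measurable (cdf μ) :=
  (cdf μ).mono.measurable

lemma energyDist_self (μ : Measure ℝ) : energyDist μ μ = 0 := by
  simp [energyDist]

lemma cdf_map_affine (μ : Measure ℝ) [IsProbabilityMeasure μ] (c : ℝ) {γ : ℝ} (hγ : 0 < γ)
    (x : ℝ) : cdf (μ.map fun y => c + γ * y) x = cdf μ ((x - c) / γ) := by
  have hmeas : Measurable fun y : ℝ => c + γ * y := by fun_prop
  have := Measure.isProbabilityMeasure_map (μ := μ) hmeas.aemeasurable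
  have hpreimage : (fun y : ℝ => c + γ * y) ⁻¹' Iic x = Iic ((x - c) / γ) := by
    ext y
    simp only [mem_preimage, mem_Iic, le_div_iff₀ hγ]
    constructor <;> intro h <;> linarith
  rw [cdf_eq_real, cdf_eq_real, measureReal_def, measureReal_def,
    Measure.map_apply hmeas measurableSet_Iic, hpreimage]

lemma lintegral_comp_sub_div {g : ℝ → ℝ≥0∞} (hg : Measurable g) (c : ℝ) {γ : ℝ} (hγ : 0 < γ) :
    ∫⁻ x, g ((x - c) / γ) = ENNReal.ofReal γ * ∫⁻ x, g x := by
  rw [lintegral_sub_right_eq_self (fun x => g (x / γ)) c]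
  conv_lhs => rw [← Real.smul_map_volume_mul_left hγ.ne']
  rw [lintegral_smul_measure, lintegral_map (by fun_prop) (by fun_prop), abs_of_pos hγ]
  simp only [mul_div_cancel_left₀ _ hγ.ne', smul_eq_mul]

lemma energyDist_map_affine (μ ν : Measure ℝ) [IsProbabilityMeasure μ] [IsProbabilityMeasure ν]
    (c : ℝ) {γ : ℝ} (hγ : 0 ≤ γ) :
    energyDist (μ.map fun y => c + γ * y) (ν.map fun y => c + γ * y) =
      ENNReal.ofReal γ * energyDist μ ν := by
  rcases hγ.eq_or_lt with rfl | hγ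
  · simp only [zero_mul, add_zero, Measure.map_const, measure_univ, ENNReal.ofReal_zero,
      energyDist_self]
  · simp only [energyDist, cdf_map_affine _ c hγ]
    exact lintegral_comp_sub_div (g := fun y => ENNReal.ofReal ((cdf μ y - cdf ν y) ^ 2))
      (by fun_prop) c hγ

section Mixture

variable {ι : Type*} [Fintype ι] {w : ι → ℝ}

lemma cdf_sum_smul (hw0 : ∀ i, 0 ≤ w i) (hw1 : ∑ i, w i = 1) (μ : ι → Measure ℝ)
    [∀ i, IsProbabilityMeasure (μ i)] (x : ℝ) :
    cdf (∑ i, ENNReal.ofReal (w i) • μ i) x = ∑ i, w i * cdf (μ i) x := by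
  have hprob : IsProbabilityMeasure (∑ i, ENNReal.ofReal (w i) • μ i) := by
    constructor
    simp only [Measure.coe_finsetSum, Measure.coe_smul, Finset.sum_apply, Pi.smul_apply,
      measure_univ, smul_eq_mul, mul_one]
    rw [← ENNReal.ofReal_sum_of_nonneg fun i _ => hw0 i, hw1, ENNReal.ofReal_one]
  simp only [cdf_eq_real, measureReal_def, Measure.coe_finsetSum, Measure.coe_smul,
    Finset.sum_apply, Pi.smul_apply, smul_eq_mul]
  rw [ENNReal.toReal_sum fun i _ => ENNReal.mul_ne_top ENNReal.ofReal_ne_top (measure_ne_top _ _)]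
  simp only [ENNReal.toReal_mul, ENNReal.toReal_ofReal (hw0 _)]

lemma energyDist_sum_smul_le (hw0 : ∀ i, 0 ≤ w i) (hw1 : ∑ i, w i = 1) (μ ν : ι → Measure ℝ)
    [∀ i, IsProbabilityMeasure (μ i)] [∀ i, IsProbabilityMeasure (ν i)] :
    energyDist (∑ i, ENNReal.ofReal (w i) • μ i) (∑ i, ENNReal.ofReal (w i) • ν i) ≤
      ∑ i, ENNReal.ofReal (w i) * energyDist (μ i) (ν i) := by
  have jensen : ∀ d : ι → ℝ, (∑ i, w i * d i) ^ 2 ≤ ∑ i, w i * d i ^ 2 := fun d =>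
    (even_two.convexOn_pow (𝕜 := ℝ)).map_sum_le (fun i _ => hw0 i) hw1 fun i _ => mem_univ _
  have hmeas : ∀ i, Measurable fun x => ENNReal.ofReal ((cdf (μ i) x - cdf (ν i) x) ^ 2) :=
    fun i => by fun_prop
  simp only [energyDist, cdf_sum_smul hw0 hw1]
  simp only [← lintegral_const_mul _ (hmeas _)]
  rw [← lintegral_finsetSum _ fun i _ => (hmeas i).const_mul _]
  refine lintegral_mono fun x => ?_
  calc ENNReal.ofReal ((∑ i, w i * cdf (μ i) x - ∑ i, w i * cdf (ν i) x) ^ 2)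
      ≤ ENNReal.ofReal (∑ i, w i * (cdf (μ i) x - cdf (ν i) x) ^ 2) := by
        rw [← Finset.sum_sub_distrib]
        simp only [← mul_sub]
        exact ENNReal.ofReal_le_ofReal (jensen _)
    _ = ∑ i, ENNReal.ofReal (w i) * ENNReal.ofReal ((cdf (μ i) x - cdf (ν i) x) ^ 2) := by
        rw [ENNReal.ofReal_sum_of_nonneg fun i _ => mul_nonneg (hw0 i) (sq_nonneg _)]
        simp only [ENNReal.ofReal_mul (hw0 _)]

end Mixture

lemma softDistBellman_eq_sum_prod {S A : Type*} [Fintype S] [Fintype A]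
    (r : S × A → ℝ) (P : S × A → S → ℝ) (pol : S → A → ℝ) (γ α : ℝ)
    (Z : S × A → Measure ℝ) (p : S × A) :
    softDistBellman r P pol γ α Z p =
      ∑ q : S × A, ENNReal.ofReal (P p q.1 * pol q.1 q.2) •
        (Z q).map fun x => (r p - γ * (α * Real.log (pol q.1 q.2))) + γ * x := by
  rw [softDistBellman, Fintype.sum_prod_type]
  congr! 5 with s' - a' - x
  ring

theorem softDistBellman_contraction_general {S A : Type*}
    [Fintype S] [Fintype A]
    (r : S × A → ℝ) (P : S × A → S → ℝ) (pol : S → A → ℝ)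
    (hP0 : ∀ p s', 0 ≤ P p s') (hP1 : ∀ p, ∑ s', P p s' = 1)
    (hpol0 : ∀ s a, 0 < pol s a) (hpol1 : ∀ s, ∑ a, pol s a = 1)
    (γ α : ℝ) (hγ0 : 0 ≤ γ)
    (Z₁ Z₂ : S × A → Measure ℝ)
    [∀ p, IsProbabilityMeasure (Z₁ p)] [∀ p, IsProbabilityMeasure (Z₂ p)] :
    (⨆ p : S × A, energyDist (softDistBellman r P pol γ α Z₁ p)
        (softDistBellman r P pol γ α Z₂ p)) ≤
      ENNReal.ofReal γ * ⨆ p : S × A, energyDist (Z₁ p) (Z₂ p) := by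
  refine iSup_le fun p => ?_
  set w : S × A → ℝ := fun q => P p q.1 * pol q.1 q.2
  have hw0 : ∀ q, 0 ≤ w q := fun q => mul_nonneg (hP0 p q.1) (hpol0 q.1 q.2).le
  have hw1 : ∑ q, w q = 1 := by
    simp only [w, Fintype.sum_prod_type, ← Finset.mul_sum, hpol1, mul_one, hP1]
  have := fun (Z : S × A → Measure ℝ) [∀ q, IsProbabilityMeasure (Z q)] (c : ℝ) (q : S × A) =>
    Measure.isProbabilityMeasure_map (μ := Z q) (f := fun x => c + γ * x) (by fun_prop)
  rw [softDistBellman_eq_sum_prod, softDistBellman_eq_sum_prod]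
  calc _ ≤ ∑ q, ENNReal.ofReal (w q) * (ENNReal.ofReal γ * energyDist (Z₁ q) (Z₂ q)) :=
        (energyDist_sum_smul_le hw0 hw1 _ _).trans_eq <| by
          simp only [energyDist_map_affine _ _ _ hγ0]
    _ ≤ ∑ q, ENNReal.ofReal (w q) * (ENNReal.ofReal γ * ⨆ q, energyDist (Z₁ q) (Z₂ q)) := by
        gcongr with q
        exact le_iSup (fun q => energyDist (Z₁ q) (Z₂ q)) q
    _ = ENNReal.ofReal γ * ⨆ q, energyDist (Z₁ q) (Z₂ q) := by
        rw [← Finset.sum_mul, ← ENNReal.ofReal_sum_of_nonneg fun q _ => hw0 q, hw1,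
          ENNReal.ofReal_one, one_mul]

/-- The soft distributional Bellman operator is a `γ`-contraction in the supremal
energy distance. -/
theorem softDistBellman_contraction {S A : Type*}
    [Fintype S] [Fintype A] [Nonempty S] [Nonempty A]
    (r : S × A → ℝ) (P : S × A → S → ℝ) (pol : S → A → ℝ)
    (hP0 : ∀ p s', 0 ≤ P p s') (hP1 : ∀ p, ∑ s', P p s' = 1)
    (hpol0 : ∀ s a, 0 < pol s a) (hpol1 : ∀ s, ∑ a, pol s a = 1)
    (γ α : ℝ) (hγ0 : 0 ≤ γ) (hγ1 : γ < 1) (hα : 0 ≤ α)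
    (Z₁ Z₂ : S × A → Measure ℝ)
    [∀ p, IsProbabilityMeasure (Z₁ p)] [∀ p, IsProbabilityMeasure (Z₂ p)]
    (hZ₁ : ∀ p, Integrable (fun x : ℝ => x) (Z₁ p))
    (hZ₂ : ∀ p, Integrable (fun x : ℝ => x) (Z₂ p)) :
    (⨆ p : S × A, energyDist (softDistBellman r P pol γ α Z₁ p)
        (softDistBellman r P pol γ α Z₂ p)) ≤
      ENNReal.ofReal γ * ⨆ p : S × A, energyDist (Z₁ p) (Z₂ p) :=
  softDistBellman_contraction_general r P pol hP0 hP1 hpol0 hpol1 γ α hγ0 Z₁ Z₂
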